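/- arXiv:1712.04274 — 2 statements merged into one kernel-verified Lean document; each statement's English description precedes it below -/
import Mathlib

section
/- Lemma 3: Let n, m ∈ ℕ with m < n, let h be a real number with 1 ≤ h < 2, and let X_D be a random variable taking values in {0, 1, …, 2^n − 1}. Write X̄_D = 2^{n−m}·⌊X_D / 2^{n−m}⌋ (the top m binary digits) and X̲_D = X_D mod 2^{n−m} (the bottom n−m binary digits), so X_D = X̄_D + X̲_D. Then H(⌊h·X_D⌋) = H(⌊h·X̄_D⌋ + ⌊h·X̲_D⌋). -/
open MeasureTheory

/-- Shannon entropy (base 2) of a random variable with (at most countably supported) law;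
for variables taking finitely many values this is the usual Shannon entropy. -/
noncomputable def entD {Ω : Type*} [MeasurableSpace Ω] (μ : Measure Ω)
    {α : Type*} (X : Ω → α) : ℝ :=
  ∑' a : α, Real.negMulLog ((μ (X ⁻¹' {a})).toReal) / Real.log 2

/-- Entropy is unchanged by composing with a map injective on the values of `X`. -/
lemma entD_comp_injOn {Ω : Type*} [MeasurableSpace Ω] (μ : Measure Ω)
    {α β : Type*} (X : Ω → α) (F : α → β) (S : Set α)
    (hF : Set.InjOn F S) (hXS : ∀ ω, X ω ∈ S) :
    entD μ (fun ω => F (X ω)) = entD μ X := by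
  unfold entD
  set f : β → ℝ := fun b => Real.negMulLog ((μ ((fun ω => F (X ω)) ⁻¹' {b})).toReal) / Real.log 2
  set g : α → ℝ := fun a => Real.negMulLog ((μ (X ⁻¹' {a})).toReal) / Real.log 2
  have fiber : ∀ a ∈ S, (fun ω => F (X ω)) ⁻¹' {F a} = X ⁻¹' {a} := by
    intro a ha
    ext ω
    simp only [Set.mem_preimage, Set.mem_singleton_iff]
    constructor
    · intro hFa
      exact hF (hXS ω) ha hFa
    · intro hXa
      rw [hXa]
  have hsupp : ∀ a : α, g a ≠ 0 → a ∈ S := by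
    intro a ha
    by_contra haS
    have : X ⁻¹' {a} = ∅ := by
      ext ω
      simp only [Set.mem_preimage, Set.mem_singleton_iff, Set.mem_empty_iff_false,
        iff_false]
      intro hXa
      exact haS (hXa ▸ hXS ω)
    apply ha
    simp [g, this, Real.negMulLog]
  refine tsum_eq_tsum_of_ne_zero_bij (fun a => F a.1) ?_ ?_ ?_
  · intro x y hxy
    exact Subtype.ext (hF (hsupp _ x.2) (hsupp _ y.2) hxy)
  · intro b hb
    have hne : (fun ω => F (X ω)) ⁻¹' {b} ≠ ∅ := by
      intro hemp
      apply hb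
      simp [f, hemp, Real.negMulLog]
    obtain ⟨ω, hω⟩ := Set.nonempty_iff_ne_empty.mpr hne
    have hωb : F (X ω) = b := hω
    have hga : g (X ω) ≠ 0 := by
      have : X ⁻¹' {X ω} = (fun ω => F (X ω)) ⁻¹' {b} := by
        rw [← hωb]; exact (fiber (X ω) (hXS ω)).symm
      simpa [g, this] using hb
    exact ⟨⟨X ω, hga⟩, hωb⟩
  · intro a
    simp only [f, g, fiber a.1 (hsupp a.1 a.2)]

lemma floor_mul_strictMono {h : ℝ} (h1 : 1 ≤ h) :
    StrictMono (fun z : ℤ => ⌊h * (z : ℝ)⌋) := by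
  intro a b hab
  have hab' : (a : ℝ) + 1 ≤ (b : ℝ) := by exact_mod_cast Int.add_one_le_iff.mpr hab
  have hle : h * (a : ℝ) + 1 ≤ h * (b : ℝ) := by nlinarith
  calc ⌊h * (a : ℝ)⌋ < ⌊h * (a : ℝ)⌋ + 1 := lt_add_one _
    _ = ⌊h * (a : ℝ) + 1⌋ := (Int.floor_add_one _).symm
    _ ≤ ⌊h * (b : ℝ)⌋ := Int.floor_le_floor hle

lemma floor_add_floor_le' (s t : ℝ) : ⌊s⌋ + ⌊t⌋ ≤ ⌊s + t⌋ := by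
  apply Int.le_floor.mpr
  push_cast
  exact add_le_add (Int.floor_le s) (Int.floor_le t)

/-- **Lemma 3.** Let `m < n`, let `1 ≤ h < 2` and let `X_D` be a random variable with values in
`{0, …, 2^n - 1}`.  With `X̄_D = 2^(n-m)·⌊X_D / 2^(n-m)⌋` (top `m` binary digits) and
`X̲_D = X_D mod 2^(n-m)` (bottom `n-m` binary digits), so that `X_D = X̄_D + X̲_D`, we have
`H(⌊h·X_D⌋) = H(⌊h·X̄_D⌋ + ⌊h·X̲_D⌋)`. -/
theorem entropy_floor_mul_eq_entropy_split
    {Ω : Type*} [MeasurableSpace Ω] (μ : Measure Ω) [IsProbabilityMeasure μ]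
    (n m : ℕ) (hmn : m < n) (h : ℝ) (h1 : 1 ≤ h) (h2 : h < 2)
    (X : Ω → ℤ) (hX : ∀ ω, X ω ∈ Finset.Ico (0 : ℤ) (2 ^ n)) :
    entD μ (fun ω => ⌊h * (X ω : ℝ)⌋) =
      entD μ (fun ω =>
        ⌊h * ((2 ^ (n - m) * (X ω / 2 ^ (n - m)) : ℤ) : ℝ)⌋ +
        ⌊h * ((X ω % 2 ^ (n - m) : ℤ) : ℝ)⌋) := by
  have h0 : (0 : ℝ) ≤ h := le_trans zero_le_one h1
  set P : ℤ := 2 ^ (n - m) with hP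
  have hPpos : (0 : ℤ) < P := pow_pos (by norm_num) _
  set F : ℤ → ℤ := fun z => ⌊h * (z : ℝ)⌋ with hF
  have hFmono : StrictMono F := floor_mul_strictMono h1
  set G : ℤ → ℤ := fun z => F (P * (z / P)) + F (z % P) with hG
  -- key: G is strictly "increasing across blocks"
  have key : ∀ x y : ℤ, x / P < y / P → G x < G y := by
    intro x y hab
    have hx1 : x % P ≤ P - 1 := by
      have := Int.emod_lt_of_pos x hPpos; omega
    have hy0 : (0 : ℤ) ≤ y % P := Int.emod_nonneg y hPpos.ne'
    have hFy0 : (0 : ℤ) ≤ F (y % P) := by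
      have : (0 : ℝ) ≤ h * ((y % P : ℤ) : ℝ) := by
        apply mul_nonneg h0
        exact_mod_cast hy0
      exact Int.le_floor.mpr (by simpa using this)
    have hFx : F (x % P) ≤ F (P - 1) := hFmono.monotone hx1
    have hstep : F (P * (x / P)) + F P ≤ F (P * (y / P)) := by
      have hPb : P * (x / P) + P ≤ P * (y / P) := by
        have : x / P + 1 ≤ y / P := hab
        nlinarith [hPpos]
      have h1' : F (P * (x / P)) + F P ≤ ⌊h * ((P * (x / P) : ℤ) : ℝ) + h * ((P : ℤ) : ℝ)⌋ :=
        floor_add_floor_le' _ _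
      have h2' : ⌊h * ((P * (x / P) : ℤ) : ℝ) + h * ((P : ℤ) : ℝ)⌋ ≤ F (P * (y / P)) := by
        apply Int.floor_le_floor
        rw [← mul_add]
        apply mul_le_mul_of_nonneg_left _ h0
        push_cast
        exact_mod_cast (by exact_mod_cast hPb : ((P * (x / P) + P : ℤ) : ℝ) ≤ ((P * (y / P) : ℤ) : ℝ))
      exact le_trans h1' h2'
    have hlt : F (P - 1) < F P := hFmono (by omega)
    calc G x = F (P * (x / P)) + F (x % P) := rfl
      _ ≤ F (P * (x / P)) + F (P - 1) := by omega
      _ < F (P * (x / P)) + F P + F (y % P) := by omega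
      _ ≤ F (P * (y / P)) + F (y % P) := by omega
      _ = G y := rfl
  have hGinj : Function.Injective G := by
    intro x y hxy
    rcases lt_trichotomy (x / P) (y / P) with hlt | heq | hgt
    · exact absurd hxy (key x y hlt).ne
    · have hdiv : P * (x / P) = P * (y / P) := by rw [heq]
      have hxy' : F (P * (x / P)) + F (x % P) = F (P * (y / P)) + F (y % P) := hxy
      have hFm : F (x % P) = F (y % P) := by rw [hdiv] at hxy'; omega
      have hmod : x % P = y % P := hFmono.injective hFm
      have ex : P * (x / P) + x % P = x := Int.mul_ediv_add_emod x P
      have ey : P * (y / P) + y % P = y := Int.mul_ediv_add_emod y P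
      omega
    · exact absurd hxy.symm (key y x hgt).ne
  have e1 : entD μ (fun ω => F (X ω)) = entD μ X :=
    entD_comp_injOn μ X F Set.univ (hFmono.injective.injOn) (fun _ => Set.mem_univ _)
  have e2 : entD μ (fun ω => G (X ω)) = entD μ X :=
    entD_comp_injOn μ X G Set.univ (hGinj.injOn) (fun _ => Set.mem_univ _)
  exact e1.trans e2.symm
end

section
/- Let n, m ∈ ℕ with m < n and let h be a real number with 1 ≤ h < 2. Then the map (a, b) ↦ ⌊h · 2^{n−m} · a⌋ + ⌊h · b⌋ is injective on the set {0, 1, …, 2^m − 1} × {0, 1, …, 2^{n−m} − 1}; consequently the sumset { ⌊h·x̄⌋ + ⌊h·x̲⌋ : x̄ ∈ {0, 2^{n−m}, …, 2^n − 2^{n−m}}, x̲ ∈ {0, …, 2^{n−m} − 1} } has cardinality exactly 2^n = 2^m · 2^{n−m}. -/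
set_option maxHeartbeats 1000000


/-- Let `m < n` and `1 ≤ h < 2`. Then the map `(a, b) ↦ ⌊h·2^(n-m)·a⌋ + ⌊h·b⌋` is injective on
`{0, …, 2^m − 1} × {0, …, 2^(n-m) − 1}`; consequently the sumset
`{⌊h·x̄⌋ + ⌊h·x̲⌋ : x̄ ∈ {0, 2^(n-m), …, 2^n − 2^(n-m)}, x̲ ∈ {0, …, 2^(n-m) − 1}}`
has cardinality exactly `2^n = 2^m · 2^(n-m)`. -/
theorem floor_mul_sumset_injOn_and_card
    (n m : ℕ) (hmn : m < n) (h : ℝ) (h1 : 1 ≤ h) (h2 : h < 2) :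
    Set.InjOn (fun p : ℤ × ℤ => ⌊h * 2 ^ (n - m) * (p.1 : ℝ)⌋ + ⌊h * (p.2 : ℝ)⌋)
      (Finset.Ico (0 : ℤ) (2 ^ m) ×ˢ Finset.Ico (0 : ℤ) (2 ^ (n - m))) ∧
      ((((Finset.Ico (0 : ℤ) (2 ^ m)).image (fun a : ℤ => 2 ^ (n - m) * a)) ×ˢ
          Finset.Ico (0 : ℤ) (2 ^ (n - m))).image
        (fun p : ℤ × ℤ => ⌊h * (p.1 : ℝ)⌋ + ⌊h * (p.2 : ℝ)⌋)).card = 2 ^ n := by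
  set k := n - m with hk
  -- strict monotonicity in the low coordinate
  have hb_mono : ∀ b b' : ℤ, 0 ≤ b → b < b' → ⌊h * (b : ℝ)⌋ < ⌊h * (b' : ℝ)⌋ := by
    intro b b' hb hbb
    have hcast : (b : ℝ) + 1 ≤ (b' : ℝ) := by exact_mod_cast hbb
    have hb' : (0 : ℝ) ≤ (b : ℝ) := by exact_mod_cast hb
    have hstep : h * (b : ℝ) + 1 ≤ h * (b' : ℝ) := by nlinarith
    calc ⌊h * (b : ℝ)⌋ < ⌊h * (b : ℝ)⌋ + 1 := by omega
      _ = ⌊h * (b : ℝ) + 1⌋ := by rw [Int.floor_add_one]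
      _ ≤ ⌊h * (b' : ℝ)⌋ := Int.floor_le_floor hstep
  -- key strict inequality when the high coordinates differ
  have key : ∀ a b a' b' : ℤ, 0 ≤ a → 0 ≤ b → b < 2 ^ k → 0 ≤ b' → a < a' →
      ⌊h * 2 ^ k * (a : ℝ)⌋ + ⌊h * (b : ℝ)⌋ < ⌊h * 2 ^ k * (a' : ℝ)⌋ + ⌊h * (b' : ℝ)⌋ := by
    intro a b a' b' ha hb hbK hb' haa
    have hKpos : (0 : ℝ) < (2 : ℝ) ^ k := by positivity
    have hb2 : (b : ℝ) ≤ 2 ^ k - 1 := by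
      have : ((b : ℝ) + 1) ≤ ((2 : ℤ) ^ k : ℝ) := by exact_mod_cast hbK
      push_cast at this; linarith
    have ha0 : (0 : ℝ) ≤ (a : ℝ) := by exact_mod_cast ha
    have hb0 : (0 : ℝ) ≤ (b : ℝ) := by exact_mod_cast hb
    have hb'0 : (0 : ℝ) ≤ (b' : ℝ) := by exact_mod_cast hb'
    have ha' : ((a : ℝ) + 1) ≤ (a' : ℝ) := by exact_mod_cast haa
    have f1 : (⌊h * 2 ^ k * (a : ℝ)⌋ : ℝ) ≤ h * 2 ^ k * a := Int.floor_le _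
    have f2 : (⌊h * (b : ℝ)⌋ : ℝ) ≤ h * b := Int.floor_le _
    have f3 : h * 2 ^ k * (a' : ℝ) - 1 < (⌊h * 2 ^ k * (a' : ℝ)⌋ : ℝ) :=
      Int.sub_one_lt_floor _
    have f4 : (0 : ℝ) ≤ (⌊h * (b' : ℝ)⌋ : ℝ) := by
      have : (0 : ℤ) ≤ ⌊h * (b' : ℝ)⌋ := Int.floor_nonneg.2 (by nlinarith)
      exact_mod_cast this
    have : ((⌊h * 2 ^ k * (a : ℝ)⌋ + ⌊h * (b : ℝ)⌋ : ℤ) : ℝ) <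
        ((⌊h * 2 ^ k * (a' : ℝ)⌋ + ⌊h * (b' : ℝ)⌋ : ℤ) : ℝ) := by
      push_cast
      have hh0 : (0 : ℝ) ≤ h := by linarith
      have e1 : h * 2 ^ k * ((a : ℝ) + 1) ≤ h * 2 ^ k * (a' : ℝ) :=
        mul_le_mul_of_nonneg_left ha' (by positivity)
      have e2 : h * (b : ℝ) ≤ h * (2 ^ k - 1) := mul_le_mul_of_nonneg_left hb2 hh0
      nlinarith
    exact_mod_cast this
  have hinj : Set.InjOn (fun p : ℤ × ℤ => ⌊h * 2 ^ k * (p.1 : ℝ)⌋ + ⌊h * (p.2 : ℝ)⌋)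
      (Finset.Ico (0 : ℤ) (2 ^ m) ×ˢ Finset.Ico (0 : ℤ) (2 ^ k)) := by
    rintro ⟨a, b⟩ hab ⟨a', b'⟩ hab' heq
    simp only [Finset.coe_product, Set.mem_prod, Finset.mem_coe, Finset.mem_Ico] at hab hab'
    obtain ⟨⟨ha0, ham⟩, hb0, hbk⟩ := hab
    obtain ⟨⟨ha0', ham'⟩, hb0', hbk'⟩ := hab'
    simp only at heq
    have haeq : a = a' := by
      rcases lt_trichotomy a a' with hlt | he | hgt
      · exact absurd heq (ne_of_lt (key a b a' b' ha0 hb0 hbk hb0' hlt))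
      · exact he
      · exact absurd heq.symm (ne_of_lt (key a' b' a b ha0' hb0' hbk' hb0 hgt))
    subst haeq
    have hbeq : b = b' := by
      rcases lt_trichotomy b b' with hlt | he | hgt
      · exact absurd heq (by have := hb_mono b b' hb0 hlt; omega)
      · exact he
      · exact absurd heq (by have := hb_mono b' b hb0' hgt; omega)
    simp [hbeq]
  refine ⟨hinj, ?_⟩
  have hginj : Set.InjOn (fun p : ℤ × ℤ => ⌊h * (p.1 : ℝ)⌋ + ⌊h * (p.2 : ℝ)⌋)
      ((((Finset.Ico (0 : ℤ) (2 ^ m)).image (fun a : ℤ => 2 ^ k * a)) ×ˢ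
        Finset.Ico (0 : ℤ) (2 ^ k)) : Finset (ℤ × ℤ)) := by
    rintro ⟨x, b⟩ hxb ⟨x', b'⟩ hxb' heq
    simp only [Finset.coe_product, Set.mem_prod, Finset.mem_coe, Finset.mem_image,
      Finset.mem_Ico] at hxb hxb'
    obtain ⟨⟨a, ha, rfl⟩, hb⟩ := hxb
    obtain ⟨⟨a', ha', rfl⟩, hb'⟩ := hxb'
    simp only at heq
    have hcast : ∀ c : ℤ, h * ((2 ^ k * c : ℤ) : ℝ) = h * 2 ^ k * (c : ℝ) := by
      intro c; push_cast; ring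
    rw [hcast, hcast] at heq
    have hm1 : ((a, b) : ℤ × ℤ) ∈
        ((↑(Finset.Ico (0 : ℤ) (2 ^ m)) : Set ℤ) ×ˢ (↑(Finset.Ico (0 : ℤ) (2 ^ k)) : Set ℤ)) := by
      simp only [Set.mem_prod, Finset.mem_coe, Finset.mem_Ico]
      exact ⟨ha, hb⟩
    have hm2 : ((a', b') : ℤ × ℤ) ∈
        ((↑(Finset.Ico (0 : ℤ) (2 ^ m)) : Set ℤ) ×ˢ (↑(Finset.Ico (0 : ℤ) (2 ^ k)) : Set ℤ)) := by
      simp only [Set.mem_prod, Finset.mem_coe, Finset.mem_Ico]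
      exact ⟨ha', hb'⟩
    have := @hinj (a, b) hm1 (a', b') hm2 heq
    simpa using congrArg (fun p : ℤ × ℤ => ((2 ^ k * p.1 : ℤ), p.2)) this
  rw [Finset.card_image_of_injOn hginj, Finset.card_product,
    Finset.card_image_of_injective _ (fun x y hxy => by
      have h2k : (2 : ℤ) ^ k ≠ 0 := by positivity
      exact mul_left_cancel₀ h2k hxy)]
  rw [Int.card_Ico, Int.card_Ico]
  simp only [sub_zero]
  rw [show ((2 : ℤ) ^ m).toNat = 2 ^ m by
      rw [show ((2 : ℤ) ^ m) = ((2 ^ m : ℕ) : ℤ) by push_cast; ring, Int.toNat_natCast],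
    show ((2 : ℤ) ^ k).toNat = 2 ^ k by
      rw [show ((2 : ℤ) ^ k) = ((2 ^ k : ℕ) : ℤ) by push_cast; ring, Int.toNat_natCast]]
  rw [← pow_add]
  congr 1
  omega
end
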